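/- Let W_α be a bounded unilateral weighted shift with positive weights. If W_αⁿ is quasinormal, then the weight sequence is periodic with period at most n: α_{j+n} = α_j for all j ≥ 0. -/

import Mathlib

/-!
Write `β j = α j * ⋯ * α (j + n - 1)`. Then `Wⁿ` is a weighted shift of step `n` with weights `β`,
and `(Wⁿ)* Wⁿ` is diagonal with entries `β j ^ 2`, so quasinormality of `Wⁿ` says exactly that `β`
is `n`-periodic. Expanding the product of `n + 1` consecutive weights in two ways gives
`α (j + n) * β j = α j * β (j + 1)`, and iterating along the period,
`α (j + k n) * β j ^ k = α j * β (j + 1) ^ k`. As the weights are bounded by `‖W‖`, this forces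
`β (j + 1) ≤ β j`; a non-increasing `n`-periodic sequence is constant, and then
`α (j + n) = α j`.
-/

noncomputable section

def e (j : ℕ) : lp (fun _ : ℕ => ℂ) 2 := lp.single 2 j 1

local notation "ℓ²" => lp (fun _ : ℕ => ℂ) 2

open Finset

lemma inner_e_left (x : ℓ²) (k : ℕ) : inner ℂ (e k) x = x k := by
  simp [e, lp.inner_single_left]

lemma e_apply (j k : ℕ) : (e j : ℕ → ℂ) k = if k = j then 1 else 0 := by
  simp [e, lp.single_apply, Pi.single_apply]

lemma norm_e (j : ℕ) : ‖e j‖ = 1 := by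
  simp [e, lp.norm_single]

lemma e_ne_zero (j : ℕ) : e j ≠ 0 :=
  norm_ne_zero_iff.mp (by simp [norm_e])

section StepShift

variable {n : ℕ} {c : ℕ → ℝ} {T : ℓ² →L[ℂ] ℓ²}

lemma star_mul_self_apply_e (hT : ∀ j, T (e j) = (c j : ℂ) • e (j + n)) (j : ℕ) :
    (star T * T) (e j) = ((c j ^ 2 : ℝ) : ℂ) • e j := by
  ext k
  have hcoord : ((star T * T) (e j) : ℕ → ℂ) k = inner ℂ (T (e k)) (T (e j)) := by
    rw [← inner_e_left, mul_apply_eq_comp, ContinuousLinearMap.star_eq_adjoint,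
      ContinuousLinearMap.adjoint_inner_right]
  rw [hcoord, hT, hT, inner_smul_left, inner_smul_right, inner_e_left, lp.coeFn_smul,
    Pi.smul_apply, e_apply, e_apply]
  by_cases hkj : k = j
  · simp [hkj, sq]
  · simp [hkj]

theorem weights_periodic_of_quasinormal (hc : ∀ j, 0 < c j)
    (hT : ∀ j, T (e j) = (c j : ℂ) • e (j + n))
    (hq : T * (star T * T) = star T * T * T) : Function.Periodic c n := by
  intro j
  have hvec : ((c j * c j ^ 2 : ℝ) : ℂ) • e (j + n) =
      ((c j * c (j + n) ^ 2 : ℝ) : ℂ) • e (j + n) := by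
    have := congrArg (· (e j)) hq
    simp only [mul_apply_eq_comp, star_mul_self_apply_e hT, hT, map_smul,
      smul_smul] at this
    convert this using 2 <;> push_cast <;> ring
  have hcube : c j * c j ^ 2 = c j * c (j + n) ^ 2 := by
    exact_mod_cast smul_left_injective ℂ (e_ne_zero (j + n)) hvec
  have hsq : c (j + n) ^ 2 = c j ^ 2 := (mul_left_cancel₀ (hc j).ne' hcube).symm
  exact (pow_left_inj₀ (hc _).le (hc j).le two_ne_zero).mp hsq

end StepShift

def blockProd {M : Type*} [CommMonoid M] (α : ℕ → M) (n j : ℕ) : M :=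
  ∏ i ∈ range n, α (j + i)

section BlockProd

variable {M : Type*} [CommMonoid M] {α : ℕ → M} {n : ℕ}

lemma blockProd_succ_left (m j : ℕ) :
    blockProd α (m + 1) j = α j * blockProd α m (j + 1) := by
  simp only [blockProd, prod_range_succ', add_zero, add_assoc, add_comm 1, mul_comm]

lemma mul_blockProd_eq (j : ℕ) : α (j + n) * blockProd α n j = α j * blockProd α n (j + 1) := by
  rw [← blockProd_succ_left, blockProd, blockProd, prod_range_succ, mul_comm]

lemma mul_blockProd_pow_eq (hβ : Function.Periodic (blockProd α n) n) (k j : ℕ) :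
    α (j + k * n) * blockProd α n j ^ k = α j * blockProd α n (j + 1) ^ k := by
  induction k with
  | zero => simp
  | succ k ih =>
    have hper : ∀ i, blockProd α n (i + k * n) = blockProd α n i := fun i => by
      simpa using hβ.nat_mul k i
    calc α (j + (k + 1) * n) * blockProd α n j ^ (k + 1)
        = α (j + k * n + n) * blockProd α n (j + k * n) * blockProd α n j ^ k := by
          rw [hper, pow_succ, add_mul, one_mul, add_assoc]; ac_rfl
      _ = α (j + k * n) * blockProd α n j ^ k * blockProd α n (j + 1) := by
          rw [mul_blockProd_eq, add_right_comm, hper]; ac_rfl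
      _ = α j * blockProd α n (j + 1) ^ (k + 1) := by rw [ih, pow_succ, mul_assoc]

end BlockProd

lemma le_of_forall_mul_pow_le {a b c C : ℝ} (ha : 0 < a) (hc : 0 < c)
    (h : ∀ k : ℕ, c * b ^ k ≤ C * a ^ k) : b ≤ a := by
  by_contra! hab
  obtain ⟨k, hk⟩ := pow_unbounded_of_one_lt (C / c) ((one_lt_div ha).mpr hab)
  rw [div_pow, div_lt_div_iff₀ hc (pow_pos ha k)] at hk
  linarith [h k]

section RealWeights

variable {α : ℕ → ℝ} {n : ℕ}

lemma blockProd_pos (hpos : ∀ j, 0 < α j) (n j : ℕ) : 0 < blockProd α n j :=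
  prod_pos fun i _ => hpos (j + i)

lemma blockProd_succ_le (hpos : ∀ j, 0 < α j) (hbdd : BddAbove (Set.range α))
    (hβ : Function.Periodic (blockProd α n) n) (j : ℕ) :
    blockProd α n (j + 1) ≤ blockProd α n j := by
  obtain ⟨C, hC⟩ := hbdd
  refine le_of_forall_mul_pow_le (C := C) (blockProd_pos hpos n j) (hpos j) fun k => ?_
  rw [← mul_blockProd_pow_eq hβ]
  have := blockProd_pos hpos n j
  gcongr
  exact hC ⟨_, rfl⟩

theorem periodic_of_blockProd_periodic (hpos : ∀ j, 0 < α j) (hbdd : BddAbove (Set.range α))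
    (hβ : Function.Periodic (blockProd α n) n) : Function.Periodic α n := by
  intro j
  rcases Nat.eq_zero_or_pos n with rfl | hn
  · rfl
  have hanti : Antitone (blockProd α n) :=
    antitone_nat_of_succ_le (blockProd_succ_le hpos hbdd hβ)
  have hconst : blockProd α n (j + 1) = blockProd α n j :=
    le_antisymm (blockProd_succ_le hpos hbdd hβ j) (hβ j ▸ hanti (by omega))
  have hstep := mul_blockProd_eq (α := α) (n := n) j
  rw [hconst] at hstep
  exact mul_right_cancel₀ (blockProd_pos hpos n j).ne' hstep

end RealWeights

section WeightedShift

variable {α : ℕ → ℝ} {W : ℓ² →L[ℂ] ℓ²}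

lemma pow_apply_e (hW : ∀ j, W (e j) = (α j : ℂ) • e (j + 1)) (m j : ℕ) :
    (W ^ m) (e j) = ((blockProd α m j : ℝ) : ℂ) • e (j + m) := by
  induction m generalizing j with
  | zero => simp [blockProd]
  | succ m ih =>
    rw [pow_succ, mul_apply_eq_comp, hW, map_smul, ih, smul_smul,
      blockProd_succ_left, add_right_comm, add_assoc]
    push_cast
    rfl

lemma weight_le_opNorm (hW : ∀ j, W (e j) = (α j : ℂ) • e (j + 1)) (j : ℕ) : α j ≤ ‖W‖ :=
  calc α j ≤ ‖W (e j)‖ := by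
        rw [hW, norm_smul, norm_e, mul_one, Complex.norm_real, Real.norm_eq_abs]
        exact le_abs_self _
    _ ≤ ‖W‖ := by simpa [norm_e] using W.le_opNorm (e j)

end WeightedShift

/-- If `W_α` is a bounded unilateral weighted shift with positive weights and `W_αⁿ` is
quasinormal, then the weight sequence is periodic with period at most `n`:
`α_{j+n} = α_j` for all `j`. -/
theorem weights_periodic_of_pow_quasinormal
    (n : ℕ) (α : ℕ → ℝ) (hpos : ∀ j, 0 < α j)
    (W : lp (fun _ : ℕ => ℂ) 2 →L[ℂ] lp (fun _ : ℕ => ℂ) 2)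
    (hW : ∀ j : ℕ, W (e j) = (α j : ℂ) • e (j + 1))
    (hq : W ^ n * (star (W ^ n) * W ^ n) = (star (W ^ n) * W ^ n) * W ^ n) :
    ∀ j : ℕ, α (j + n) = α j := by
  have hβ : Function.Periodic (blockProd α n) n :=
    weights_periodic_of_quasinormal (blockProd_pos hpos n) (pow_apply_e hW n) hq
  have hbdd : BddAbove (Set.range α) := ⟨‖W‖, Set.forall_mem_range.mpr (weight_le_opNorm hW)⟩
  exact periodic_of_blockProd_periodic hpos hbdd hβ
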